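/- arXiv:2303.13345 — 8 statements merged into one kernel-verified Lean document; each statement's English description precedes it below -/
import Mathlib

section
/- If g_k is not parallel to s_{k-1}, then the solution (u_k, v_k) of the least-squares problem min over u,v of ‖d^{PS} - (u g_k + v s_{k-1})‖² , where d^{PS} = -g_k + [g_k^T y_{k-1}/(s_{k-1}^T y_{k-1}) - (τ + ‖y_{k-1}‖²/(s_{k-1}^T y_{k-1}))·g_k^T s_{k-1}/(s_{k-1}^T y_{k-1})] s_{k-1} + (g_k^T s_{k-1}/(s_{k-1}^T y_{k-1})) y_{k-1}, is given by u_k = (1/(1-ω))·(-1 + (g_k^T y_{k-1})(g_k^T s_{k-1})/((s_{k-1}^T y_{k-1})‖g_k‖²)) and v_k = ((1-2ω)/(1-ω))·(g_k^T y_{k-1})/(s_{k-1}^T y_{k-1}) - (τ + ‖y_{k-1}‖²/(s_{k-1}^T y_{k-1}) - s_{k-1}^T y_{k-1}/((1-ω)‖s_{k-1}‖²))·(g_k^T s_{k-1})/(s_{k-1}^T y_{k-1}), where ω = (g_k^T s_{k-1})²/(‖g_k‖²‖s_{k-1}‖²). -/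
open scoped RealInnerProductSpace

lemma ortho1 (a b c p q t τ : ℝ) (ha : a ≠ 0) (hc : c ≠ 0) (hq : q ≠ 0)
    (hd : a * c - b ^ 2 ≠ 0) :
    (1 / (1 - b ^ 2 / (a * c))) * (-1 + p * b / (q * a)) * a +
      (((1 - 2 * (b ^ 2 / (a * c))) / (1 - b ^ 2 / (a * c))) * (p / q) -
        (τ + t / q - q / ((1 - b ^ 2 / (a * c)) * c)) * (b / q)) * b =
    -a + (p / q - (τ + t / q) * (b / q)) * b + (b / q) * p := by
  have h1 : 1 - b ^ 2 / (a * c) = (a * c - b ^ 2) / (a * c) := by field_simp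
  rw [h1]
  field_simp
  ring

lemma ortho2 (a b c p q t τ : ℝ) (ha : a ≠ 0) (hc : c ≠ 0) (hq : q ≠ 0)
    (hd : a * c - b ^ 2 ≠ 0) :
    (1 / (1 - b ^ 2 / (a * c))) * (-1 + p * b / (q * a)) * b +
      (((1 - 2 * (b ^ 2 / (a * c))) / (1 - b ^ 2 / (a * c))) * (p / q) -
        (τ + t / q - q / ((1 - b ^ 2 / (a * c)) * c)) * (b / q)) * c =
    -b + (p / q - (τ + t / q) * (b / q)) * c + (b / q) * q := by
  have h1 : 1 - b ^ 2 / (a * c) = (a * c - b ^ 2) / (a * c) := by field_simp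
  rw [h1]
  field_simp
  ring

lemma helper {n : ℕ} (g s d : EuclideanSpace ℝ (Fin n)) (uk vk : ℝ)
    (hdet : ‖g‖ ^ 2 * ‖s‖ ^ 2 - ⟪g, s⟫ ^ 2 ≠ 0)
    (h1 : ⟪g, d - (uk • g + vk • s)⟫ = 0)
    (h2 : ⟪s, d - (uk • g + vk • s)⟫ = 0) :
    (∀ u v : ℝ, ‖d - (uk • g + vk • s)‖ ^ 2 ≤ ‖d - (u • g + v • s)‖ ^ 2) ∧
      (∀ u v : ℝ, ‖d - (u • g + v • s)‖ ^ 2 = ‖d - (uk • g + vk • s)‖ ^ 2 →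
        u = uk ∧ v = vk) := by
  have key : ∀ u v : ℝ, ‖d - (u • g + v • s)‖ ^ 2 =
      ‖d - (uk • g + vk • s)‖ ^ 2 + ‖(uk - u) • g + (vk - v) • s‖ ^ 2 := by
    intro u v
    have hdecomp : d - (u • g + v • s) =
        (d - (uk • g + vk • s)) + ((uk - u) • g + (vk - v) • s) := by
      module
    rw [hdecomp, norm_add_sq_real]
    have horth : ⟪d - (uk • g + vk • s), (uk - u) • g + (vk - v) • s⟫ = 0 := by
      rw [real_inner_comm, inner_add_left, real_inner_smul_left, real_inner_smul_left,
        h1, h2]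
      ring
    rw [horth]; ring
  constructor
  · intro u v
    rw [key u v]
    nlinarith [sq_nonneg ‖(uk - u) • g + (vk - v) • s‖]
  · intro u v h
    rw [key u v] at h
    have hw : ‖(uk - u) • g + (vk - v) • s‖ ^ 2 = 0 := by linarith
    have hw0 : (uk - u) • g + (vk - v) • s = 0 := by
      rwa [pow_eq_zero_iff (two_ne_zero), norm_eq_zero] at hw
    have e1 : (uk - u) * ‖g‖ ^ 2 + (vk - v) * ⟪g, s⟫ = 0 := by
      have h' := congrArg (fun w => (⟪g, w⟫ : ℝ)) hw0
      simp only [inner_add_right, real_inner_smul_right, inner_zero_right] at h'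
      rw [real_inner_self_eq_norm_sq] at h'
      linear_combination h'
    have e2 : (uk - u) * ⟪g, s⟫ + (vk - v) * ‖s‖ ^ 2 = 0 := by
      have h' := congrArg (fun w => (⟪s, w⟫ : ℝ)) hw0
      simp only [inner_add_right, real_inner_smul_right, inner_zero_right] at h'
      rw [real_inner_self_eq_norm_sq, real_inner_comm g s] at h'
      linear_combination h' 
    have hα : (uk - u) * (‖g‖ ^ 2 * ‖s‖ ^ 2 - ⟪g, s⟫ ^ 2) = 0 := by
      linear_combination ‖s‖ ^ 2 * e1 - ⟪g, s⟫ * e2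
    have hβ : (vk - v) * (‖g‖ ^ 2 * ‖s‖ ^ 2 - ⟪g, s⟫ ^ 2) = 0 := by
      linear_combination ‖g‖ ^ 2 * e2 - ⟪g, s⟫ * e1
    have hu : uk - u = 0 := by
      rcases mul_eq_zero.mp hα with h' | h'
      · exact h'
      · exact absurd h' hdet
    have hv : vk - v = 0 := by
      rcases mul_eq_zero.mp hβ with h' | h'
      · exact h'
      · exact absurd h' hdet
    constructor <;> linarith

/-- the projection of the scaled memoryless Perry–Shanno direction onto
`span {g, s}` has the stated coefficients `u_k, v_k`. -/
theorem stmt_0 {n : ℕ} (g s y : EuclideanSpace ℝ (Fin n)) (τ : ℝ)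
    (hsy : 0 < ⟪s, y⟫) (hg : g ≠ 0) (hs : s ≠ 0)
    (hpar : ⟪g, s⟫ ^ 2 < ‖g‖ ^ 2 * ‖s‖ ^ 2) :
    let ω : ℝ := ⟪g, s⟫ ^ 2 / (‖g‖ ^ 2 * ‖s‖ ^ 2)
    let dPS : EuclideanSpace ℝ (Fin n) :=
      -g + (⟪g, y⟫ / ⟪s, y⟫ -
        (τ + ‖y‖ ^ 2 / ⟪s, y⟫) * (⟪g, s⟫ / ⟪s, y⟫)) • s +
        (⟪g, s⟫ / ⟪s, y⟫) • y
    let uk : ℝ := (1 / (1 - ω)) * (-1 + ⟪g, y⟫ * ⟪g, s⟫ / (⟪s, y⟫ * ‖g‖ ^ 2))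
    let vk : ℝ := ((1 - 2 * ω) / (1 - ω)) * (⟪g, y⟫ / ⟪s, y⟫) -
      (τ + ‖y‖ ^ 2 / ⟪s, y⟫ - ⟪s, y⟫ / ((1 - ω) * ‖s‖ ^ 2)) *
        (⟪g, s⟫ / ⟪s, y⟫)
    (∀ u v : ℝ, ‖dPS - (uk • g + vk • s)‖ ^ 2 ≤ ‖dPS - (u • g + v • s)‖ ^ 2) ∧
      (∀ u v : ℝ, ‖dPS - (u • g + v • s)‖ ^ 2 = ‖dPS - (uk • g + vk • s)‖ ^ 2 →
        u = uk ∧ v = vk) := by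
  intro ω dPS uk vk
  have hq : ⟪s, y⟫ ≠ 0 := ne_of_gt hsy
  have ha : (‖g‖ : ℝ) ^ 2 ≠ 0 := pow_ne_zero 2 (norm_ne_zero_iff.mpr hg)
  have hc : (‖s‖ : ℝ) ^ 2 ≠ 0 := pow_ne_zero 2 (norm_ne_zero_iff.mpr hs)
  have hdet : ‖g‖ ^ 2 * ‖s‖ ^ 2 - ⟪g, s⟫ ^ 2 ≠ 0 := by
    have := hpar; intro h; linarith
  have hdet' : ‖g‖ ^ 2 * ‖s‖ ^ 2 - ⟪g, s⟫ ^ 2 ≠ 0 := hdet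
  refine helper g s dPS uk vk hdet ?_ ?_
  · unfold dPS uk vk ω
    rw [inner_sub_right, inner_add_right, inner_add_right, inner_add_right,
      real_inner_smul_right, real_inner_smul_right, real_inner_smul_right,
      real_inner_smul_right, inner_neg_right, real_inner_self_eq_norm_sq]
    linear_combination -(ortho1 (‖g‖ ^ 2) ⟪g, s⟫ (‖s‖ ^ 2) ⟪g, y⟫ ⟪s, y⟫ (‖y‖ ^ 2) τ ha hc hq hdet)
  · unfold dPS uk vk ω
    rw [inner_sub_right, inner_add_right, inner_add_right, inner_add_right,
      real_inner_smul_right, real_inner_smul_right, real_inner_smul_right,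
      real_inner_smul_right, inner_neg_right, real_inner_self_eq_norm_sq,
      real_inner_comm g s]
    linear_combination -(ortho2 (‖g‖ ^ 2) ⟪g, s⟫ (‖s‖ ^ 2) ⟪g, y⟫ ⟪s, y⟫ (‖y‖ ^ 2) τ ha hc hq hdet)
end

section
/- The projected search direction d_k = u_k g_k + v_k s_{k-1} (with u_k, v_k as defined by the projection of the scaled memoryless Perry–Shanno direction) satisfies the Dai–Liao conjugacy condition: d_k^T y_{k-1} = t_k · g_k^T s_{k-1}, where t_k = [((g_k^T y_{k-1})²‖s_{k-1}‖²/(s_{k-1}^T y_{k-1}) - 2(g_k^T y_{k-1})(g_k^T s_{k-1}) + ‖g_k‖² s_{k-1}^T y_{k-1})/(‖g_k‖²‖s_{k-1}‖² - (g_k^T s_{k-1})²)] - (τ + ‖y_{k-1}‖²/(s_{k-1}^T y_{k-1})). -/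
open scoped RealInnerProductSpace

/-- the projected direction satisfies the Dai–Liao conjugacy condition. -/
theorem stmt_1 {n : ℕ} (g s y : EuclideanSpace ℝ (Fin n)) (τ : ℝ)
    (hsy : 0 < ⟪s, y⟫) (hg : g ≠ 0) (hs : s ≠ 0)
    (hpar : ⟪g, s⟫ ^ 2 < ‖g‖ ^ 2 * ‖s‖ ^ 2) :
    let uk : ℝ := -1 + ⟪g, y⟫ * ⟪g, s⟫ / (⟪s, y⟫ * ‖g‖ ^ 2) -
      (‖g‖ ^ 2 * ⟪g, s⟫ ^ 2 - ⟪g, y⟫ * ⟪g, s⟫ ^ 3 / ⟪s, y⟫) /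
        (‖g‖ ^ 2 * (‖g‖ ^ 2 * ‖s‖ ^ 2 - ⟪g, s⟫ ^ 2))
    let vk : ℝ := ⟪g, y⟫ / ⟪s, y⟫ +
      (‖g‖ ^ 2 * ⟪g, s⟫ - ⟪g, y⟫ * ⟪g, s⟫ ^ 2 / ⟪s, y⟫) /
        (‖g‖ ^ 2 * ‖s‖ ^ 2 - ⟪g, s⟫ ^ 2) -
      (τ + ‖y‖ ^ 2 / ⟪s, y⟫) * (⟪g, s⟫ / ⟪s, y⟫)
    let d : EuclideanSpace ℝ (Fin n) := uk • g + vk • s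
    let tk : ℝ := (⟪g, y⟫ ^ 2 * ‖s‖ ^ 2 / ⟪s, y⟫ - 2 * ⟪g, y⟫ * ⟪g, s⟫ +
        ‖g‖ ^ 2 * ⟪s, y⟫) / (‖g‖ ^ 2 * ‖s‖ ^ 2 - ⟪g, s⟫ ^ 2) -
      (τ + ‖y‖ ^ 2 / ⟪s, y⟫)
    ⟪d, y⟫ = tk * ⟪g, s⟫ := by
  intro uk vk d tk
  have hc : ⟪s, y⟫ ≠ 0 := ne_of_gt hsy
  have hG : ‖g‖ ^ 2 ≠ 0 := pow_ne_zero _ (norm_ne_zero_iff.mpr hg)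
  have hD : ‖g‖ ^ 2 * ‖s‖ ^ 2 - ⟪g, s⟫ ^ 2 ≠ 0 := by nlinarith [hpar]
  have hd : ⟪d, y⟫ = uk * ⟪g, y⟫ + vk * ⟪s, y⟫ := by
    show ⟪uk • g + vk • s, y⟫ = _
    rw [inner_add_left, real_inner_smul_left, real_inner_smul_left]
  rw [hd]
  show (-1 + ⟪g, y⟫ * ⟪g, s⟫ / (⟪s, y⟫ * ‖g‖ ^ 2) -
      (‖g‖ ^ 2 * ⟪g, s⟫ ^ 2 - ⟪g, y⟫ * ⟪g, s⟫ ^ 3 / ⟪s, y⟫) /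
        (‖g‖ ^ 2 * (‖g‖ ^ 2 * ‖s‖ ^ 2 - ⟪g, s⟫ ^ 2))) * ⟪g, y⟫ +
    (⟪g, y⟫ / ⟪s, y⟫ +
      (‖g‖ ^ 2 * ⟪g, s⟫ - ⟪g, y⟫ * ⟪g, s⟫ ^ 2 / ⟪s, y⟫) /
        (‖g‖ ^ 2 * ‖s‖ ^ 2 - ⟪g, s⟫ ^ 2) -
      (τ + ‖y‖ ^ 2 / ⟪s, y⟫) * (⟪g, s⟫ / ⟪s, y⟫)) * ⟪s, y⟫ =
    ((⟪g, y⟫ ^ 2 * ‖s‖ ^ 2 / ⟪s, y⟫ - 2 * ⟪g, y⟫ * ⟪g, s⟫ +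
        ‖g‖ ^ 2 * ⟪s, y⟫) / (‖g‖ ^ 2 * ‖s‖ ^ 2 - ⟪g, s⟫ ^ 2) -
      (τ + ‖y‖ ^ 2 / ⟪s, y⟫)) * ⟪g, s⟫
  generalize ⟪g, y⟫ = A at *
  generalize hB : ⟪g, s⟫ = B at *
  generalize ⟪s, y⟫ = C at *
  generalize ‖g‖ ^ 2 = G at *
  generalize ‖s‖ ^ 2 = S at *
  generalize ‖y‖ ^ 2 = Y at *
  field_simp
  ring
end

section
/- The symmetric matrix H̄ = I - (s y^T + y s^T)/(s^T y) + t̄·(s s^T)/(s^T y), where t̄ = τ + ‖y‖²/(s^T y), has determinant equal to τ‖s‖²/(s^T y) times the product of its n-2 unit eigenvalues; more precisely its two nontrivial eigenvalues λ_min, λ_max satisfy λ_min·λ_max = τ‖s‖²/(s^T y) and λ_min + λ_max = ‖y‖²‖s‖²/(s^T y)² + τ‖s‖²/(s^T y), all other eigenvalues equal 1. -/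
/-!
`H̄` is a rank-two perturbation `1 + C * R` of the identity, with `C = [s y]`. By the
Weinstein–Aronszajn identity `det (1 + C * R) = det (1 + R * C)`, and since `C * R` and `R * C`
share their nonzero eigenvalues, every eigenvalue `μ ≠ 1` of `H̄` is an eigenvalue of the `2 × 2`
matrix `1 + R * C`, i.e. a root of `μ² - S μ + D` with `S` its trace and `D` its determinant.
Strict Cauchy–Schwarz for the independent vectors `s, y` makes this quadratic negative at `1`,
so it has two real roots `λ_min < 1 < λ_max`, both of which are eigenvalues of `H̄`.
-/

open Matrix

namespace Matrix

section Spectrum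

variable {K : Type*} [Field K] {m k : Type*} [Fintype m] [DecidableEq m] [Fintype k]
  [DecidableEq k]

open Polynomial in
theorem mem_spectrum_mul_comm_of_ne_zero (A : Matrix m k K) (B : Matrix k m K) {μ : K}
    (hμ : μ ≠ 0) : μ ∈ spectrum K (A * B) ↔ μ ∈ spectrum K (B * A) := by
  have h := congrArg (eval μ) (charpoly_mul_comm' A B)
  simp only [eval_mul, eval_pow, eval_X] at h
  rw [mem_spectrum_iff_isRoot_charpoly, mem_spectrum_iff_isRoot_charpoly, IsRoot.def, IsRoot.def,
    ← mul_eq_zero_iff_left (pow_ne_zero (Fintype.card k) hμ), h,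
    mul_eq_zero_iff_left (pow_ne_zero _ hμ)]

theorem mem_spectrum_one_add_iff (A : Matrix m m K) (μ : K) :
    μ ∈ spectrum K (1 + A) ↔ μ - 1 ∈ spectrum K A := by
  rw [spectrum.mem_iff, spectrum.mem_iff, map_sub, map_one, sub_add_eq_sub_sub]

theorem mem_spectrum_one_add_mul_comm_of_ne_one (A : Matrix m k K) (B : Matrix k m K) {μ : K}
    (hμ : μ ≠ 1) : μ ∈ spectrum K (1 + A * B) ↔ μ ∈ spectrum K (1 + B * A) := by
  rw [mem_spectrum_one_add_iff, mem_spectrum_one_add_iff,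
    mem_spectrum_mul_comm_of_ne_zero A B (sub_ne_zero.mpr hμ)]

theorem mem_spectrum_fin_two_iff (M : Matrix (Fin 2) (Fin 2) K) (μ : K) :
    μ ∈ spectrum K M ↔ μ ^ 2 - M.trace * μ + M.det = 0 := by
  simp [mem_spectrum_iff_isRoot_charpoly, charpoly_fin_two]

end Spectrum

section RankTwo

variable {R : Type*} [CommRing R] {n : Type*}

theorem vecMulVec_add_vecMulVec_eq_mul (u₀ u₁ v₀ v₁ : n → R) :
    vecMulVec u₀ v₀ + vecMulVec u₁ v₁ = (of ![u₀, u₁])ᵀ * of ![v₀, v₁] := by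
  ext i j
  simp [mul_apply, Fin.sum_univ_two, vecMulVec_apply]

theorem one_add_of_mul_transpose_of [Fintype n] (u₀ u₁ v₀ v₁ : n → R) :
    1 + of ![v₀, v₁] * (of ![u₀, u₁])ᵀ =
      !![1 + v₀ ⬝ᵥ u₀, v₀ ⬝ᵥ u₁; v₁ ⬝ᵥ u₀, 1 + v₁ ⬝ᵥ u₁] := by
  ext i j
  fin_cases i <;> fin_cases j <;> simp [vecMul_transpose, dotProduct_comm]

theorem det_one_add_vecMulVec_add_vecMulVec [Fintype n] [DecidableEq n] (u₀ u₁ v₀ v₁ : n → R) :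
    (1 + vecMulVec u₀ v₀ + vecMulVec u₁ v₁).det =
      (1 + v₀ ⬝ᵥ u₀) * (1 + v₁ ⬝ᵥ u₁) - (v₀ ⬝ᵥ u₁) * (v₁ ⬝ᵥ u₀) := by
  rw [add_assoc, vecMulVec_add_vecMulVec_eq_mul, det_one_add_mul_comm,
    one_add_of_mul_transpose_of, det_fin_two_of]

theorem one_sub_smul_add_smul_vecMulVec [DecidableEq n] (s y : n → R) (b c : R) :
    1 - b • (vecMulVec s y + vecMulVec y s) + c • vecMulVec s s =
      1 + vecMulVec s (c • s - b • y) + vecMulVec y (-b • s) := by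
  simp only [vecMulVec_sub, vecMulVec_smul]
  module

end RankTwo

theorem mem_spectrum_one_add_vecMulVec_add_vecMulVec_iff {K n : Type*} [Field K] [Fintype n]
    [DecidableEq n] (u₀ u₁ v₀ v₁ : n → K) {μ : K} (hμ : μ ≠ 1) :
    μ ∈ spectrum K (1 + vecMulVec u₀ v₀ + vecMulVec u₁ v₁) ↔
      μ ^ 2 - (1 + v₀ ⬝ᵥ u₀ + (1 + v₁ ⬝ᵥ u₁)) * μ +
        ((1 + v₀ ⬝ᵥ u₀) * (1 + v₁ ⬝ᵥ u₁) - (v₀ ⬝ᵥ u₁) * (v₁ ⬝ᵥ u₀)) = 0 := by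
  rw [add_assoc, vecMulVec_add_vecMulVec_eq_mul, mem_spectrum_one_add_mul_comm_of_ne_one _ _ hμ,
    one_add_of_mul_transpose_of, mem_spectrum_fin_two_iff, trace_fin_two_of, det_fin_two_of]

theorem sq_dotProduct_lt_of_linearIndependent {n : Type*} [Fintype n] {s y : n → ℝ}
    (h : LinearIndependent ℝ ![s, y]) : (s ⬝ᵥ y) ^ 2 < (s ⬝ᵥ s) * (y ⬝ᵥ y) := by
  have hpos : ∀ v : n → ℝ, v ≠ 0 → 0 < v ⬝ᵥ v := fun v hv ↦ by
    simpa using dotProduct_star_self_pos_iff.mpr hv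
  have hs : 0 < s ⬝ᵥ s := hpos s (by simpa using h.ne_zero 0)
  -- `w` is `‖s‖²` times the component of `y` orthogonal to `s`
  set w := (s ⬝ᵥ s) • y - (s ⬝ᵥ y) • s
  have hw : w ≠ 0 := fun hw ↦
    hs.ne' (LinearIndependent.pair_iff.mp h (-(s ⬝ᵥ y)) (s ⬝ᵥ s) (by rw [← hw]; module)).2
  have hww : w ⬝ᵥ w = (s ⬝ᵥ s) * ((s ⬝ᵥ s) * (y ⬝ᵥ y) - (s ⬝ᵥ y) ^ 2) := by
    simp only [w, dotProduct_sub, sub_dotProduct, dotProduct_smul, smul_dotProduct, smul_eq_mul,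
      dotProduct_comm y s]
    ring
  exact sub_pos.mp (pos_of_mul_pos_right (hww ▸ hpos w hw) hs.le)

end Matrix

theorem exists_quadratic_roots_of_neg {S D x : ℝ} (h : x ^ 2 - S * x + D < 0) :
    ∃ a b, a < x ∧ x < b ∧ a * b = D ∧ a + b = S ∧
      ∀ μ, μ ^ 2 - S * μ + D = 0 ↔ μ = a ∨ μ = b := by
  set r := Real.sqrt (S ^ 2 - 4 * D)
  have hr : r ^ 2 = S ^ 2 - 4 * D := Real.sq_sqrt (by nlinarith [sq_nonneg (2 * x - S)])
  have hlt : |S - 2 * x| < r := abs_lt_of_sq_lt_sq (by nlinarith) (Real.sqrt_nonneg _)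
  refine ⟨(S - r) / 2, (S + r) / 2, by linarith [(abs_lt.mp hlt).2],
    by linarith [(abs_lt.mp hlt).1], by linear_combination (-1 / 4 : ℝ) * hr, by ring,
    fun μ ↦ ?_⟩
  rw [← sub_eq_zero (a := μ), ← sub_eq_zero (a := μ), ← mul_eq_zero]
  constructor <;> intro h'
  · linear_combination h' - (1 / 4 : ℝ) * hr
  · linear_combination h' + (1 / 4 : ℝ) * hr

theorem stmt_4_general {n : ℕ} (s y : Fin n → ℝ) (τ : ℝ)
    (hsy : 0 < s ⬝ᵥ y)
    (hind : LinearIndependent ℝ ![s, y]) :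
    let tbar : ℝ := τ + (y ⬝ᵥ y) / (s ⬝ᵥ y)
    let Hbar : Matrix (Fin n) (Fin n) ℝ :=
      1 - (s ⬝ᵥ y)⁻¹ • (vecMulVec s y + vecMulVec y s) +
        ((s ⬝ᵥ y)⁻¹ * tbar) • vecMulVec s s
    Hbar.det = τ * (s ⬝ᵥ s) / (s ⬝ᵥ y) * 1 ^ (n - 2) ∧
      ∃ lmin lmax : ℝ,
        lmin * lmax = τ * (s ⬝ᵥ s) / (s ⬝ᵥ y) ∧
        lmin + lmax = (y ⬝ᵥ y) * (s ⬝ᵥ s) / (s ⬝ᵥ y) ^ 2 + τ * (s ⬝ᵥ s) / (s ⬝ᵥ y) ∧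
        lmin ∈ spectrum ℝ Hbar ∧ lmax ∈ spectrum ℝ Hbar ∧
        spectrum ℝ Hbar ⊆ {lmin, lmax, 1} := by
  intro tbar Hbar
  have hsy₀ : s ⬝ᵥ y ≠ 0 := hsy.ne'
  set S := (y ⬝ᵥ y) * (s ⬝ᵥ s) / (s ⬝ᵥ y) ^ 2 + τ * (s ⬝ᵥ s) / (s ⬝ᵥ y)
  set D := τ * (s ⬝ᵥ s) / (s ⬝ᵥ y)
  have hH : Hbar = 1 + vecMulVec s (((s ⬝ᵥ y)⁻¹ * tbar) • s - (s ⬝ᵥ y)⁻¹ • y) +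
      vecMulVec y (-(s ⬝ᵥ y)⁻¹ • s) :=
    one_sub_smul_add_smul_vecMulVec s y _ _
  have hdet : Hbar.det = D := by
    rw [hH, det_one_add_vecMulVec_add_vecMulVec]
    simp only [sub_dotProduct, smul_dotProduct, smul_eq_mul, dotProduct_comm y s, tbar, D]
    field_simp
    ring
  have hspec : ∀ μ ≠ 1, μ ∈ spectrum ℝ Hbar ↔ μ ^ 2 - S * μ + D = 0 := by
    intro μ hμ
    rw [hH, mem_spectrum_one_add_vecMulVec_add_vecMulVec_iff _ _ _ _ hμ]
    simp only [sub_dotProduct, smul_dotProduct, smul_eq_mul, dotProduct_comm y s, tbar, D, S]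
    field_simp
    ring_nf
  have hone : 1 ^ 2 - S * 1 + D < 0 := by
    have := sq_dotProduct_lt_of_linearIndependent hind
    simp only [S, D]
    field_simp
    nlinarith
  obtain ⟨lmin, lmax, hmin, hmax, hprod, hsum, hroots⟩ := exists_quadratic_roots_of_neg hone
  refine ⟨by rw [hdet, one_pow, mul_one], lmin, lmax, hprod, hsum,
    (hspec lmin hmin.ne).2 ((hroots lmin).2 (.inl rfl)),
    (hspec lmax hmax.ne').2 ((hroots lmax).2 (.inr rfl)), fun μ hμ ↦ ?_⟩
  rcases eq_or_ne μ 1 with rfl | h1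
  · simp
  · rcases (hroots μ).1 ((hspec μ h1).1 hμ) with rfl | rfl <;> simp

/-- the symmetrized matrix `H̄` has `n - 2` unit eigenvalues and two
nontrivial eigenvalues `λ₁, λ₂` with `λ₁λ₂ = τ‖s‖²/(sᵀy)` and
`λ₁ + λ₂ = ‖y‖²‖s‖²/(sᵀy)² + τ‖s‖²/(sᵀy)`; in particular
`det H̄ = τ‖s‖²/(sᵀy) · 1^(n-2)`. -/
theorem stmt_4 {n : ℕ} (hn : 2 ≤ n) (s y : Fin n → ℝ) (τ : ℝ)
    (hsy : 0 < s ⬝ᵥ y) (hτ : 0 < τ)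
    (hind : LinearIndependent ℝ ![s, y]) :
    let tbar : ℝ := τ + (y ⬝ᵥ y) / (s ⬝ᵥ y)
    let Hbar : Matrix (Fin n) (Fin n) ℝ :=
      1 - (s ⬝ᵥ y)⁻¹ • (vecMulVec s y + vecMulVec y s) +
        ((s ⬝ᵥ y)⁻¹ * tbar) • vecMulVec s s
    Hbar.det = τ * (s ⬝ᵥ s) / (s ⬝ᵥ y) * 1 ^ (n - 2) ∧
      ∃ lmin lmax : ℝ,
        lmin * lmax = τ * (s ⬝ᵥ s) / (s ⬝ᵥ y) ∧
        lmin + lmax = (y ⬝ᵥ y) * (s ⬝ᵥ s) / (s ⬝ᵥ y) ^ 2 + τ * (s ⬝ᵥ s) / (s ⬝ᵥ y) ∧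
        lmin ∈ spectrum ℝ Hbar ∧ lmax ∈ spectrum ℝ Hbar ∧
        spectrum ℝ Hbar ⊆ {lmin, lmax, 1} :=
  stmt_4_general s y τ hsy hind
end

section
/- With p = ‖y‖²‖s‖²/(s^T y)² and γ = τ‖s‖²/(s^T y), the smallest nontrivial eigenvalue of H̄ equals λ_min = (p + γ - √((p+γ)² - 4γ))/2, and λ_min > 0 whenever τ > 0 and s^T y > 0. -/
/-!
Write `q(μ) = μ² - (p + γ) μ + γ`. Off `span {s, y}` the matrix `H̄` is the identity, and on
`span {s, y}` it acts by a `2 × 2` matrix whose characteristic polynomial is `q`. Hence every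
eigenvalue `μ ≠ 1` is a root of `q`, while `q(1) = 1 - p ≤ 0` by Cauchy–Schwarz. So every
eigenvalue satisfies `q(μ) ≤ 0` and lies above the smaller root `λ_min` of `q`, which is itself an
eigenvalue (with eigenvector `λ_min s - (sᵀs / sᵀy) y`); it is positive because `p + γ > 0` and
`γ > 0`.
-/

open Matrix

theorem Matrix.mem_spectrum_iff_exists_mulVec_eq_smul {ι K : Type*} [Fintype ι] [DecidableEq ι]
    [Field K] (A : Matrix ι ι K) (μ : K) :
    μ ∈ spectrum K A ↔ ∃ v ≠ 0, A *ᵥ v = μ • v := by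
  rw [← spectrum_toLin', ← Module.End.hasEigenvalue_iff_mem_spectrum]
  constructor
  · intro h
    obtain ⟨v, hv, hv0⟩ := h.exists_hasEigenvector
    exact ⟨v, hv0, by simpa using Module.End.mem_eigenspace_iff.mp hv⟩
  · rintro ⟨v, hv0, hv⟩
    exact Module.End.hasEigenvalue_of_hasEigenvector
      ⟨Module.End.mem_eigenspace_iff.mpr (by simpa using hv), hv0⟩

theorem dotProduct_sq_le {ι : Type*} [Fintype ι] (s y : ι → ℝ) :
    (s ⬝ᵥ y) ^ 2 ≤ (s ⬝ᵥ s) * (y ⬝ᵥ y) := by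
  simpa [dotProduct, sq] using Finset.sum_mul_sq_le_sq_mul_sq Finset.univ s y

noncomputable def lowerRoot (T D : ℝ) : ℝ := (T - √(T ^ 2 - 4 * D)) / 2

theorem sq_sub_two_mul_le_discrim {T D μ : ℝ} (h : μ ^ 2 - T * μ + D ≤ 0) :
    (T - 2 * μ) ^ 2 ≤ T ^ 2 - 4 * D := by
  nlinarith

theorem discrim_nonneg {T D μ : ℝ} (h : μ ^ 2 - T * μ + D ≤ 0) : 0 ≤ T ^ 2 - 4 * D :=
  (sq_nonneg _).trans (sq_sub_two_mul_le_discrim h)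

theorem lowerRoot_le {T D μ : ℝ} (h : μ ^ 2 - T * μ + D ≤ 0) : lowerRoot T D ≤ μ := by
  have : T - 2 * μ ≤ √(T ^ 2 - 4 * D) :=
    (le_abs_self _).trans (Real.abs_le_sqrt (sq_sub_two_mul_le_discrim h))
  unfold lowerRoot
  linarith

theorem lowerRoot_isRoot {T D : ℝ} (h : 0 ≤ T ^ 2 - 4 * D) :
    lowerRoot T D ^ 2 - T * lowerRoot T D + D = 0 := by
  unfold lowerRoot
  linear_combination Real.sq_sqrt h / 4

theorem lowerRoot_pos {T D : ℝ} (hT : 0 < T) (hD : 0 < D) : 0 < lowerRoot T D := by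
  have : √(T ^ 2 - 4 * D) < T := (Real.sqrt_lt' hT).mpr (by linarith)
  unfold lowerRoot
  linarith

theorem mul_sub_mul_eq_zero_of_nontrivial_solution {a b c d u v : ℝ} (h₁ : a * u + b * v = 0)
    (h₂ : c * u + d * v = 0) (huv : u ≠ 0 ∨ v ≠ 0) : a * d - b * c = 0 := by
  have hu : (a * d - b * c) * u = 0 := by linear_combination d * h₁ - b * h₂
  have hv : (a * d - b * c) * v = 0 := by linear_combination a * h₂ - c * h₁
  rcases huv with hu0 | hv0
  · exact (mul_eq_zero.mp hu).resolve_right hu0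
  · exact (mul_eq_zero.mp hv).resolve_right hv0

namespace Hbar

variable {ι : Type*} [Fintype ι] {s y : ι → ℝ} {τ : ℝ}

noncomputable def p (s y : ι → ℝ) : ℝ := (y ⬝ᵥ y) * (s ⬝ᵥ s) / (s ⬝ᵥ y) ^ 2

noncomputable def γ (s y : ι → ℝ) (τ : ℝ) : ℝ := τ * (s ⬝ᵥ s) / (s ⬝ᵥ y)

theorem quadratic_one_nonpos (hd : s ⬝ᵥ y ≠ 0) :
    1 ^ 2 - (p s y + γ s y τ) * 1 + γ s y τ ≤ 0 := by
  have : 1 ≤ p s y := by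
    rw [p, le_div_iff₀ (by positivity), one_mul, mul_comm]
    exact dotProduct_sq_le s y
  linarith

end Hbar

section

variable {ι : Type*} [Fintype ι] [DecidableEq ι] {s y : ι → ℝ} {τ : ℝ}

noncomputable def Hbar (s y : ι → ℝ) (τ : ℝ) : Matrix ι ι ℝ :=
  1 - (s ⬝ᵥ y)⁻¹ • (vecMulVec s y + vecMulVec y s) +
    ((s ⬝ᵥ y)⁻¹ * (τ + (y ⬝ᵥ y) / (s ⬝ᵥ y))) • vecMulVec s s

namespace Hbar

theorem mulVec_eq (v : ι → ℝ) :
    Hbar s y τ *ᵥ v = v + ((s ⬝ᵥ y)⁻¹ * (τ + (y ⬝ᵥ y) / (s ⬝ᵥ y)) * (s ⬝ᵥ v)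
      - (y ⬝ᵥ v) / (s ⬝ᵥ y)) • s - ((s ⬝ᵥ v) / (s ⬝ᵥ y)) • y := by
  simp only [Hbar, add_mulVec, sub_mulVec, one_mulVec, smul_mulVec, vecMulVec_mulVec,
    op_smul_eq_smul]
  module

theorem mulVec_add_smul (hd : s ⬝ᵥ y ≠ 0) (a b : ℝ) :
    Hbar s y τ *ᵥ (a • s + b • y) =
      (a * (p s y + γ s y τ) + b * τ) • s - (a * (s ⬝ᵥ s) / (s ⬝ᵥ y)) • y := by
  rw [mulVec_eq]
  simp only [dotProduct_add, dotProduct_smul, smul_eq_mul, dotProduct_comm y s, p, γ]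
  match_scalars <;> field_simp <;> ring

theorem exists_eq_add_smul_of_mulVec_eq_smul {μ : ℝ} (hμ : μ ≠ 1) {x : ι → ℝ}
    (hx : Hbar s y τ *ᵥ x = μ • x) : ∃ a b : ℝ, x = a • s + b • y := by
  have hsub : (μ - 1) • x = ((s ⬝ᵥ y)⁻¹ * (τ + (y ⬝ᵥ y) / (s ⬝ᵥ y)) * (s ⬝ᵥ x)
      - (y ⬝ᵥ x) / (s ⬝ᵥ y)) • s + (-((s ⬝ᵥ x) / (s ⬝ᵥ y))) • y := by
    rw [mulVec_eq] at hx
    linear_combination (norm := module) -hx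
  rw [← eq_inv_smul_iff₀ (sub_ne_zero.mpr hμ), smul_add, smul_smul, smul_smul] at hsub
  exact ⟨_, _, hsub⟩

theorem quadratic_eq_zero_of_mulVec_eq_smul (hd : s ⬝ᵥ y ≠ 0)
    (hind : LinearIndependent ℝ ![s, y]) {μ a b : ℝ} (hab : a ≠ 0 ∨ b ≠ 0)
    (hx : Hbar s y τ *ᵥ (a • s + b • y) = μ • (a • s + b • y)) :
    μ ^ 2 - (p s y + γ s y τ) * μ + γ s y τ = 0 := by
  rw [mulVec_add_smul hd] at hx
  obtain ⟨hs, hy⟩ := LinearIndependent.pair_iff.mp hind (a * (p s y + γ s y τ) + b * τ - μ * a)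
    (-(a * (s ⬝ᵥ s) / (s ⬝ᵥ y)) - μ * b) (by linear_combination (norm := module) hx)
  have hdet := mul_sub_mul_eq_zero_of_nontrivial_solution (a := p s y + γ s y τ - μ) (b := τ)
    (c := -((s ⬝ᵥ s) / (s ⬝ᵥ y))) (d := -μ) (by linear_combination hs)
    (by linear_combination hy) hab
  have hγ : τ * ((s ⬝ᵥ s) / (s ⬝ᵥ y)) = γ s y τ := by rw [γ, mul_div_assoc]
  linear_combination hdet - hγ

theorem mem_spectrum_of_quadratic_eq_zero (hd : s ⬝ᵥ y ≠ 0)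
    (hind : LinearIndependent ℝ ![s, y]) {r : ℝ}
    (hr : r ^ 2 - (p s y + γ s y τ) * r + γ s y τ = 0) : r ∈ spectrum ℝ (Hbar s y τ) := by
  have hs : s ≠ 0 := by simpa using hind.ne_zero 0
  have hss : (s ⬝ᵥ s) / (s ⬝ᵥ y) ≠ 0 := div_ne_zero (by simpa using hs) hd
  rw [mem_spectrum_iff_exists_mulVec_eq_smul]
  refine ⟨r • s + (-((s ⬝ᵥ s) / (s ⬝ᵥ y))) • y, fun h => ?_, ?_⟩
  · exact hss (neg_eq_zero.mp (LinearIndependent.pair_iff.mp hind _ _ h).2)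
  · rw [mulVec_add_smul hd]
    have hγ : τ * ((s ⬝ᵥ s) / (s ⬝ᵥ y)) = γ s y τ := by rw [γ, mul_div_assoc]
    match_scalars
    · linear_combination -hr - hγ
    · ring

theorem quadratic_nonpos_of_mem_spectrum (hd : s ⬝ᵥ y ≠ 0)
    (hind : LinearIndependent ℝ ![s, y]) {μ : ℝ} (hμ : μ ∈ spectrum ℝ (Hbar s y τ)) :
    μ ^ 2 - (p s y + γ s y τ) * μ + γ s y τ ≤ 0 := by
  rcases eq_or_ne μ 1 with rfl | hμ1
  · exact quadratic_one_nonpos hd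
  obtain ⟨x, hx0, hx⟩ := (mem_spectrum_iff_exists_mulVec_eq_smul _ _).mp hμ
  obtain ⟨a, b, rfl⟩ := exists_eq_add_smul_of_mulVec_eq_smul hμ1 hx
  refine (quadratic_eq_zero_of_mulVec_eq_smul hd hind ?_ hx).le
  by_contra! h
  simp [h] at hx0

end Hbar

end

/-- with `p = ‖y‖²‖s‖²/(sᵀy)²` and `γ = τ‖s‖²/(sᵀy)`, the smallest
eigenvalue of `H̄` is `(p + γ - √((p+γ)² - 4γ))/2`, and it is positive. -/
theorem stmt_5 {n : ℕ} (s y : Fin n → ℝ) (τ : ℝ)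
    (hsy : 0 < s ⬝ᵥ y) (hτ : 0 < τ)
    (hind : LinearIndependent ℝ ![s, y]) :
    let Hbar : Matrix (Fin n) (Fin n) ℝ :=
      1 - (s ⬝ᵥ y)⁻¹ • (vecMulVec s y + vecMulVec y s) +
        ((s ⬝ᵥ y)⁻¹ * (τ + (y ⬝ᵥ y) / (s ⬝ᵥ y))) • vecMulVec s s
    let p : ℝ := (y ⬝ᵥ y) * (s ⬝ᵥ s) / (s ⬝ᵥ y) ^ 2
    let γ : ℝ := τ * (s ⬝ᵥ s) / (s ⬝ᵥ y)
    let lmin : ℝ := (p + γ - Real.sqrt ((p + γ) ^ 2 - 4 * γ)) / 2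
    lmin ∈ spectrum ℝ Hbar ∧ (∀ μ ∈ spectrum ℝ Hbar, lmin ≤ μ) ∧ 0 < lmin := by
  intro H p γ lmin
  have hd := hsy.ne'
  have hone : 1 ^ 2 - (p + γ) * 1 + γ ≤ 0 := Hbar.quadratic_one_nonpos hd
  have hγ : 0 < γ := by
    have : 0 < s ⬝ᵥ s := by simpa using dotProduct_self_star_pos_iff.mpr (hind.ne_zero 0)
    positivity
  refine ⟨Hbar.mem_spectrum_of_quadratic_eq_zero hd hind (lowerRoot_isRoot ?_),
    fun μ hμ => lowerRoot_le (Hbar.quadratic_nonpos_of_mem_spectrum hd hind hμ),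
    lowerRoot_pos (by linarith) hγ⟩
  exact discrim_nonneg hone
end

section
/- If s^T y > 0 and τ > 0, then for d = -H g with H = I - (2 s y^T - (τ + ‖y‖²/(s^T y)) s s^T)/(s^T y), one has g^T d < 0 for every nonzero g ∈ ℝ^n; that is, g^T d = -‖g‖² + 2(g^T s)(g^T y)/(s^T y) - (τ + ‖y‖²/(s^T y))·(g^T s)²/(s^T y) < 0. -/
open scoped RealInnerProductSpace

/-- descent property of `d = -Hg` for every nonzero `g`. -/
theorem stmt_6 {n : ℕ} (s y : EuclideanSpace ℝ (Fin n)) (τ : ℝ)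
    (hs : s ≠ 0) (hsy : 0 < ⟪s, y⟫) (hτ : 0 < τ) :
    ∀ g : EuclideanSpace ℝ (Fin n), g ≠ 0 →
      let d : EuclideanSpace ℝ (Fin n) :=
        -g + (2 * ⟪g, y⟫ / ⟪s, y⟫ - (τ + ‖y‖ ^ 2 / ⟪s, y⟫) * (⟪g, s⟫ / ⟪s, y⟫)) • s
      ⟪g, d⟫ = -‖g‖ ^ 2 + 2 * ⟪g, s⟫ * ⟪g, y⟫ / ⟪s, y⟫ -
          (τ + ‖y‖ ^ 2 / ⟪s, y⟫) * ⟪g, s⟫ ^ 2 / ⟪s, y⟫ ∧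
        ⟪g, d⟫ < 0 := by
  intro g hg d
  have hc : ⟪s, y⟫ ≠ 0 := ne_of_gt hsy
  have h1 : ⟪g, d⟫ = -‖g‖ ^ 2 + 2 * ⟪g, s⟫ * ⟪g, y⟫ / ⟪s, y⟫ -
      (τ + ‖y‖ ^ 2 / ⟪s, y⟫) * ⟪g, s⟫ ^ 2 / ⟪s, y⟫ := by
    simp only [d, inner_add_right, inner_neg_right, inner_smul_right,
      real_inner_self_eq_norm_sq]
    field_simp
    ring
  refine ⟨h1, ?_⟩
  rw [h1]
  set a := ⟪g, s⟫ with ha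
  have key : -‖g‖ ^ 2 + 2 * a * ⟪g, y⟫ / ⟪s, y⟫ - (τ + ‖y‖ ^ 2 / ⟪s, y⟫) * a ^ 2 / ⟪s, y⟫
      = -‖g - (a / ⟪s, y⟫) • y‖ ^ 2 - τ * a ^ 2 / ⟪s, y⟫ := by
    rw [norm_sub_sq_real, real_inner_smul_right, norm_smul, mul_pow, Real.norm_eq_abs, sq_abs]
    field_simp
    ring
  rw [key]
  rcases eq_or_ne a 0 with h | h
  · have : g - (a / ⟪s, y⟫) • y = g := by rw [h]; simp
    rw [this, h]
    have : 0 < ‖g‖ ^ 2 := pow_pos (norm_pos_iff.mpr hg) 2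
    simpa using this
  · have h2 : 0 < τ * a ^ 2 / ⟪s, y⟫ := by positivity
    have h3 : 0 ≤ ‖g - (a / ⟪s, y⟫) • y‖ ^ 2 := by positivity
    linarith
end

section
/- With the scaling τ = ‖y‖²/(s^T y), the descent quantity satisfies the uniform bound g^T d ≤ -(1/2)‖g‖² for all g ∈ ℝ^n, where g^T d = -‖g‖² + 2(g^T s)(g^T y)/(s^T y) - (τ + ‖y‖²/(s^T y))·(g^T s)²/(s^T y). Equivalently, the smallest eigenvalue λ_min = p - √(p² - p) of the associated symmetric matrix (p = ‖y‖²‖s‖²/(s^T y)² ≥ 1) satisfies λ_min > 1/2. -/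
open scoped RealInnerProductSpace

/-- with `τ = ‖y‖²/⟪s,y⟫` the descent quantity is at most `-½‖g‖²`,
and the associated smallest eigenvalue `p - √(p² - p)` exceeds `1/2`. -/
theorem stmt_7 {n : ℕ} (s y : EuclideanSpace ℝ (Fin n))
    (hsy : 0 < ⟪s, y⟫) (hind : LinearIndependent ℝ ![s, y]) :
    let τ : ℝ := ‖y‖ ^ 2 / ⟪s, y⟫
    let p : ℝ := ‖y‖ ^ 2 * ‖s‖ ^ 2 / ⟪s, y⟫ ^ 2
    (∀ g : EuclideanSpace ℝ (Fin n),
        -‖g‖ ^ 2 + 2 * ⟪g, s⟫ * ⟪g, y⟫ / ⟪s, y⟫ -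
          (τ + ‖y‖ ^ 2 / ⟪s, y⟫) * ⟪g, s⟫ ^ 2 / ⟪s, y⟫ ≤ -(1 / 2) * ‖g‖ ^ 2) ∧
      1 / 2 < p - Real.sqrt (p ^ 2 - p) := by
  intro τ p
  have hc : (0:ℝ) < ⟪s, y⟫ := hsy
  constructor
  · intro g
    -- key: 2⟪g,s⟫⟪g,y⟫/c ≤ ½‖g‖² + 2‖y‖²⟪g,s⟫²/c²
    have hcs : |⟪g, y⟫| ≤ ‖g‖ * ‖y‖ := abs_real_inner_le_norm g y
    have key : 2 * ⟪g, s⟫ * ⟪g, y⟫ / ⟪s, y⟫ ≤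
        (1/2) * ‖g‖ ^ 2 + 2 * ‖y‖ ^ 2 * ⟪g, s⟫ ^ 2 / ⟪s, y⟫ ^ 2 := by
      set t : ℝ := |⟪g, s⟫| / ⟪s, y⟫ with ht
      have ht0 : 0 ≤ t := div_nonneg (abs_nonneg _) hc.le
      have h1 : 2 * ⟪g, s⟫ * ⟪g, y⟫ / ⟪s, y⟫ ≤ 2 * t * (‖g‖ * ‖y‖) := by
        have : 2 * ⟪g, s⟫ * ⟪g, y⟫ / ⟪s, y⟫ ≤ 2 * |⟪g, s⟫| * |⟪g, y⟫| / ⟪s, y⟫ := by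
          apply div_le_div_of_nonneg_right ?_ hc.le |>.trans_eq rfl
          calc 2 * ⟪g, s⟫ * ⟪g, y⟫ ≤ |2 * ⟪g, s⟫ * ⟪g, y⟫| := le_abs_self _
            _ = 2 * |⟪g, s⟫| * |⟪g, y⟫| := by rw [abs_mul, abs_mul]; simp
        refine this.trans ?_
        rw [ht]
        have : 2 * |⟪g, s⟫| * |⟪g, y⟫| / ⟪s, y⟫ = 2 * (|⟪g, s⟫| / ⟪s, y⟫) * |⟪g, y⟫| := by
          ring
        rw [this]
        have := mul_le_mul_of_nonneg_left hcs (by positivity : (0:ℝ) ≤ 2 * (|⟪g, s⟫| / ⟪s, y⟫))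
        linarith
      have h2 : 2 * t * (‖g‖ * ‖y‖) ≤ (1/2) * ‖g‖ ^ 2 + 2 * t ^ 2 * ‖y‖ ^ 2 := by
        nlinarith [sq_nonneg (‖g‖ - 2 * t * ‖y‖)]
      have h3 : 2 * t ^ 2 * ‖y‖ ^ 2 = 2 * ‖y‖ ^ 2 * ⟪g, s⟫ ^ 2 / ⟪s, y⟫ ^ 2 := by
        rw [ht, div_pow, sq_abs]; ring
      linarith
    have hτ : (τ + ‖y‖ ^ 2 / ⟪s, y⟫) * ⟪g, s⟫ ^ 2 / ⟪s, y⟫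
        = 2 * ‖y‖ ^ 2 * ⟪g, s⟫ ^ 2 / ⟪s, y⟫ ^ 2 := by
      show (‖y‖ ^ 2 / ⟪s, y⟫ + ‖y‖ ^ 2 / ⟪s, y⟫) * ⟪g, s⟫ ^ 2 / ⟪s, y⟫ = _
      field_simp
      ring
    rw [hτ]
    linarith
  · -- p > 1 by strict Cauchy–Schwarz
    have hs0 : s ≠ 0 := by
      intro h
      exact (hind.ne_zero 0 (by simp [h]))
    have hne : ∀ a : ℝ, a • s ≠ y := (LinearIndependent.pair_iff' hs0).mp hind
    have hstrict : ⟪s, y⟫ < ‖s‖ * ‖y‖ := by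
      rw [inner_lt_norm_mul_iff_real]
      intro h
      have hys : ‖y‖ ≠ 0 := by
        intro hy0
        exact hne 0 (by simp [norm_eq_zero.mp hy0])
      apply hne (‖y‖ / ‖s‖)
      have hs0' : ‖s‖ ≠ 0 := norm_ne_zero_iff.mpr hs0
      have : (‖y‖ / ‖s‖) • s = ‖s‖⁻¹ • (‖y‖ • s) := by
        rw [smul_smul]; ring_nf
      rw [this, h, smul_smul, inv_mul_cancel₀ hs0', one_smul]
    have hp1 : 1 < p := by
      show (1:ℝ) < ‖y‖ ^ 2 * ‖s‖ ^ 2 / ⟪s, y⟫ ^ 2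
      rw [lt_div_iff₀ (by positivity)]
      nlinarith
    have : Real.sqrt (p ^ 2 - p) < p - 1/2 :=
      (Real.sqrt_lt' (by linarith)).mpr (by nlinarith)
    linarith
end

section
/- Consider minimizing the strictly convex quadratic q(x) = ½ x^T A x + b^T x on ℝ², with iterations x_{k+1} = x_k + d_k where d_0 = -α_0 g_0 with α_0 the exact minimizing stepsize, and d_k = u_k g_k + v_k s_{k-1} for k ≥ 1 given by the projection formulas with τ = 1 (g_k = A x_k + b, s_{k-1} = x_k - x_{k-1}, y_{k-1} = g_k - g_{k-1}). Then g_j = 0 for some j ≤ 3 (the method terminates finitely in at most three steps). -/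
open Matrix

/-- The coefficient `u_k` of the projected search direction (eq. (14) of the paper),
written with dot products (`g ⬝ᵥ g = ‖g‖²` for Euclidean vectors). -/
noncomputable def uCoef (g s y : Fin 2 → ℝ) : ℝ :=
  -1 + (g ⬝ᵥ y) * (g ⬝ᵥ s) / ((g ⬝ᵥ g) * (s ⬝ᵥ y)) -
    ((g ⬝ᵥ g) * (g ⬝ᵥ s) - (g ⬝ᵥ y) * (g ⬝ᵥ s) ^ 2 / (s ⬝ᵥ y)) /
      ((g ⬝ᵥ g) * (s ⬝ᵥ s) - (g ⬝ᵥ s) ^ 2) * ((g ⬝ᵥ s) / (g ⬝ᵥ g))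

/-- The coefficient `v_k` of the projected search direction (eq. (15) of the paper)
with scaling factor `τ`. -/
noncomputable def vCoef (τ : ℝ) (g s y : Fin 2 → ℝ) : ℝ :=
  (g ⬝ᵥ y) / (s ⬝ᵥ y) - (τ + (y ⬝ᵥ y) / (s ⬝ᵥ y)) * ((g ⬝ᵥ s) / (s ⬝ᵥ y)) +
    ((g ⬝ᵥ g) * (g ⬝ᵥ s) - (g ⬝ᵥ y) * (g ⬝ᵥ s) ^ 2 / (s ⬝ᵥ y)) /
      ((g ⬝ᵥ g) * (s ⬝ᵥ s) - (g ⬝ᵥ s) ^ 2)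

/-!
Exact line search makes `g₁ ⊥ s₀`. Then `u₁ = -1` and `v₁ = g₁ᵀy₀ / s₀ᵀy₀`, i.e. the first
projected direction is the Hestenes–Stiefel direction, which is `A`-conjugate to `s₀`; hence
`g₂ ⊥ s₀` too. In the plane this forces `g₁ ∥ g₂`, so `y₁ = μ g₂`. For such `y₁` the formulas give
`u₂ = 0` and `v₂ = -1/μ`, so `A s₂ = -y₁/μ = -g₂` and `g₃ = g₂ + A s₂ = 0`.
-/

section Fin2

variable {K : Type*} [Field K] {w a c : Fin 2 → K}

lemma cross_eq_zero_of_dotProduct_eq_zero (hw : w ≠ 0) (ha : a ⬝ᵥ w = 0) (hc : c ⬝ᵥ w = 0) :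
    a 0 * c 1 - a 1 * c 0 = 0 := by
  simp only [dotProduct, Fin.sum_univ_two] at ha hc
  by_contra hdet
  refine hw (funext fun i => ?_)
  fin_cases i <;> simp only [Fin.zero_eta, Fin.mk_one, Pi.zero_apply]
  · exact mul_left_cancel₀ hdet (by linear_combination c 1 * ha - a 1 * hc)
  · exact mul_left_cancel₀ hdet (by linear_combination a 0 * hc - c 0 * ha)

lemma exists_eq_smul_of_cross_eq_zero (ha : a ≠ 0) (hcross : a 0 * c 1 - a 1 * c 0 = 0) :
    ∃ t : K, c = t • a := by
  have ha' : a 0 ≠ 0 ∨ a 1 ≠ 0 := by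
    by_contra! h
    exact ha (funext fun i => by fin_cases i <;> simp [h.1, h.2])
  rcases ha' with h | h
  · refine ⟨c 0 / a 0, funext fun i => ?_⟩
    fin_cases i <;> simp only [Fin.zero_eta, Fin.mk_one, Pi.smul_apply, smul_eq_mul] <;> field_simp
    linear_combination hcross
  · refine ⟨c 1 / a 1, funext fun i => ?_⟩
    fin_cases i <;> simp only [Fin.zero_eta, Fin.mk_one, Pi.smul_apply, smul_eq_mul] <;> field_simp
    linear_combination -hcross

lemma exists_eq_smul_of_dotProduct_eq_zero (hw : w ≠ 0) (ha : a ⬝ᵥ w = 0) (hc : c ⬝ᵥ w = 0)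
    (hane : a ≠ 0) : ∃ t : K, c = t • a :=
  exists_eq_smul_of_cross_eq_zero hane (cross_eq_zero_of_dotProduct_eq_zero hw ha hc)

end Fin2

section Coef

variable {g s y : Fin 2 → ℝ} {τ μ : ℝ}

lemma uCoef_of_dotProduct_eq_zero (h : g ⬝ᵥ s = 0) : uCoef g s y = -1 := by
  simp [uCoef, h]

lemma vCoef_of_dotProduct_eq_zero (h : g ⬝ᵥ s = 0) : vCoef τ g s y = (g ⬝ᵥ y) / (s ⬝ᵥ y) := by
  simp [vCoef, h]

lemma correction_eq_zero_of_eq_smul (hy : y = μ • g) (hsy : s ⬝ᵥ y ≠ 0) :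
    (g ⬝ᵥ g) * (g ⬝ᵥ s) - (g ⬝ᵥ y) * (g ⬝ᵥ s) ^ 2 / (s ⬝ᵥ y) = 0 := by
  subst hy
  simp only [dotProduct_smul, smul_eq_mul, dotProduct_comm s g] at hsy ⊢
  obtain ⟨hμ, hgs⟩ := mul_ne_zero_iff.mp hsy
  field_simp
  ring

lemma uCoef_of_eq_smul (hy : y = μ • g) (hsy : s ⬝ᵥ y ≠ 0) : uCoef g s y = 0 := by
  rw [uCoef, correction_eq_zero_of_eq_smul hy hsy, zero_div, zero_mul, sub_zero]
  subst hy
  simp only [dotProduct_smul, smul_eq_mul, dotProduct_comm s g] at hsy ⊢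
  obtain ⟨hμ, hgs⟩ := mul_ne_zero_iff.mp hsy
  have hgg : g ⬝ᵥ g ≠ 0 := fun h => hgs (by rw [dotProduct_self_eq_zero.mp h, zero_dotProduct])
  field_simp
  ring

lemma vCoef_of_eq_smul (hy : y = μ • g) (hsy : s ⬝ᵥ y ≠ 0) : vCoef τ g s y = -τ / μ := by
  rw [vCoef, correction_eq_zero_of_eq_smul hy hsy, zero_div, add_zero]
  subst hy
  simp only [smul_dotProduct, dotProduct_smul, smul_eq_mul, dotProduct_comm s g] at hsy ⊢
  obtain ⟨hμ, hgs⟩ := mul_ne_zero_iff.mp hsy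
  have hgg : g ⬝ᵥ g ≠ 0 := fun h => hgs (by rw [dotProduct_self_eq_zero.mp h, zero_dotProduct])
  field_simp
  ring

end Coef

section Quadratic

variable {n : Type*} [Fintype n] {A : Matrix n n ℝ}

lemma mulVec_dotProduct_of_isSymm (hA : A.IsSymm) (v w : n → ℝ) :
    A *ᵥ v ⬝ᵥ w = v ⬝ᵥ A *ᵥ w := by
  rw [dotProduct_mulVec, ← vecMul_transpose, hA]

lemma mulVec_add_dotProduct_sub_eq_zero_of_exact_step {b x x' g : n → ℝ}
    (hgx : g = A *ᵥ x + b) (hx' : x' = x - ((g ⬝ᵥ g) / (g ⬝ᵥ A *ᵥ g)) • g)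
    (hgA : g ⬝ᵥ A *ᵥ g ≠ 0) : (A *ᵥ x' + b) ⬝ᵥ (x' - x) = 0 := by
  have hgrad : A *ᵥ x' + b = g - ((g ⬝ᵥ g) / (g ⬝ᵥ A *ᵥ g)) • A *ᵥ g := by
    rw [hx', hgx, mulVec_sub, mulVec_smul]
    abel
  rw [hgrad, hx', sub_sub_cancel_left, dotProduct_neg, dotProduct_smul, sub_dotProduct,
    smul_dotProduct, dotProduct_comm (A *ᵥ g), smul_eq_mul _ (g ⬝ᵥ A *ᵥ g),
    div_mul_cancel₀ _ hgA, sub_self, smul_zero, neg_zero]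

end Quadratic

section Step

variable {A : Matrix (Fin 2) (Fin 2) ℝ} {g s y : Fin 2 → ℝ}

/-- When `g ⊥ s` the direction is the Hestenes–Stiefel direction `-g + β s`, which is
`A`-conjugate to `s`. -/
lemma add_mulVec_step_dotProduct_eq_zero (τ : ℝ) (hA : A.IsSymm) (hy : A *ᵥ s = y)
    (hgs : g ⬝ᵥ s = 0) (hsy : s ⬝ᵥ y ≠ 0) :
    (g + A *ᵥ (uCoef g s y • g + vCoef τ g s y • s)) ⬝ᵥ s = 0 := by
  rw [uCoef_of_dotProduct_eq_zero hgs, vCoef_of_dotProduct_eq_zero hgs, mulVec_add,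
    mulVec_smul, mulVec_smul, hy, add_dotProduct, add_dotProduct, smul_dotProduct,
    smul_dotProduct, mulVec_dotProduct_of_isSymm hA, hy, hgs, dotProduct_comm y s,
    smul_eq_mul, smul_eq_mul, div_mul_cancel₀ _ hsy]
  ring

/-- With `y ∥ g` the step is `-(τ/μ) s`, so the new gradient is `(1 - τ) g`: it vanishes
exactly for `τ = 1`. -/
lemma add_mulVec_step_eq_zero {μ : ℝ} (hy : A *ᵥ s = y) (hyg : y = μ • g)
    (hsy : s ⬝ᵥ y ≠ 0) : g + A *ᵥ (uCoef g s y • g + vCoef 1 g s y • s) = 0 := by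
  have hμ : μ ≠ 0 := by
    rintro rfl
    simp [hyg] at hsy
  rw [uCoef_of_eq_smul hyg hsy, vCoef_of_eq_smul hyg hsy, zero_smul, zero_add, mulVec_smul,
    hy, hyg, smul_smul, div_mul_cancel₀ _ hμ, neg_one_smul, add_neg_cancel]

end Step

/-- finite termination (in at most three steps) of the SMCG method with
`τ = 1` on a two-dimensional strictly convex quadratic, with an exact first step. -/
theorem stmt_12 (A : Matrix (Fin 2) (Fin 2) ℝ) (hAsymm : A.IsSymm) (hApd : A.PosDef)
    (b : Fin 2 → ℝ) (x g : ℕ → Fin 2 → ℝ)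
    (hg : ∀ k, g k = A.mulVec (x k) + b)
    (hx1 : x 1 = x 0 - ((g 0 ⬝ᵥ g 0) / (g 0 ⬝ᵥ A.mulVec (g 0))) • g 0)
    (hwell : ∀ k, 1 ≤ k → k ≤ 2 → g k ≠ 0 →
      ((x k - x (k - 1)) ⬝ᵥ (g k - g (k - 1)) ≠ 0 ∧
        (g k ⬝ᵥ g k) * ((x k - x (k - 1)) ⬝ᵥ (x k - x (k - 1))) -
          (g k ⬝ᵥ (x k - x (k - 1))) ^ 2 ≠ 0))
    (hstep : ∀ k, 1 ≤ k → k ≤ 2 → g k ≠ 0 →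
      x (k + 1) = x k +
        uCoef (g k) (x k - x (k - 1)) (g k - g (k - 1)) • g k +
        vCoef 1 (g k) (x k - x (k - 1)) (g k - g (k - 1)) • (x k - x (k - 1))) :
    ∃ j ≤ 3, g j = 0 := by
  by_cases h0 : g 0 = 0
  · exact ⟨0, by norm_num, h0⟩
  by_cases h1 : g 1 = 0
  · exact ⟨1, by norm_num, h1⟩
  by_cases h2 : g 2 = 0
  · exact ⟨2, by norm_num, h2⟩
  refine ⟨3, le_rfl, ?_⟩
  have hy : ∀ j k, A *ᵥ (x j - x k) = g j - g k := fun j k => by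
    rw [hg j, hg k, mulVec_sub]
    abel
  have hnext : ∀ j k, g j = g k + A *ᵥ (x j - x k) := fun j k => by
    rw [hy]
    abel
  have hdir : ∀ k, 1 ≤ k → k ≤ 2 → g k ≠ 0 → x (k + 1) - x k =
      uCoef (g k) (x k - x (k - 1)) (g k - g (k - 1)) • g k +
        vCoef 1 (g k) (x k - x (k - 1)) (g k - g (k - 1)) • (x k - x (k - 1)) :=
    fun k hk1 hk2 hgk => sub_eq_iff_eq_add'.mpr ((hstep k hk1 hk2 hgk).trans (add_assoc _ _ _))
  have hsy0 : (x 1 - x 0) ⬝ᵥ (g 1 - g 0) ≠ 0 := (hwell 1 le_rfl one_le_two h1).1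
  have hsy1 : (x 2 - x 1) ⬝ᵥ (g 2 - g 1) ≠ 0 := (hwell 2 one_le_two le_rfl h2).1
  have h1s0 : g 1 ⬝ᵥ (x 1 - x 0) = 0 := hg 1 ▸
    mulVec_add_dotProduct_sub_eq_zero_of_exact_step (hg 0) hx1
      (by simpa using (hApd.dotProduct_mulVec_pos h0).ne')
  have h2s0 : g 2 ⬝ᵥ (x 1 - x 0) = 0 := by
    rw [hnext 2 1, hdir 1 le_rfl one_le_two h1]
    exact add_mulVec_step_dotProduct_eq_zero 1 hAsymm (hy 1 0) h1s0 hsy0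
  obtain ⟨t, ht⟩ := exists_eq_smul_of_dotProduct_eq_zero
    (fun hs0 => hsy0 (by rw [hs0, zero_dotProduct])) h2s0 h1s0 h2
  have hy1 : g 2 - g 1 = (1 - t) • g 2 := by rw [ht, sub_smul, one_smul]
  rw [hnext 3 2, hdir 2 one_le_two le_rfl h2]
  exact add_mulVec_step_eq_zero (hy 2 1) hy1 hsy1
end

section
/- In the setting of the two-dimensional quadratic termination proof: if after an exact first step g_1^T s_0 = 0 and the next direction satisfies s_1^T y_0 = 0 (Dai–Liao conjugacy with g_1^T s_0 = 0), and g_2 ≠ 0, then in ℝ² there exists a ≠ 0 with y_1 = a g_2, and the projection coefficients evaluate to u_2 = 0 and v_2 = -τ/a, hence g_3 = (1 - τ) g_2. -/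
open Matrix

lemma ucalc (a G S1 SS : ℝ) (hG : G ≠ 0) (haS : a * S1 ≠ 0)
    (hpar : G * SS - S1 ^ 2 ≠ 0) :
    -1 + a * G * S1 / (G * (a * S1)) -
      (G * S1 - a * G * S1 ^ 2 / (a * S1)) / (G * SS - S1 ^ 2) * (S1 / G) = 0 := by
  have ha : a ≠ 0 := left_ne_zero_of_mul haS
  have hS1 : S1 ≠ 0 := right_ne_zero_of_mul haS
  field_simp
  ring

lemma vcalc (τ a G S1 SS : ℝ) (haS : a * S1 ≠ 0)
    (hpar : G * SS - S1 ^ 2 ≠ 0) :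
    a * G / (a * S1) - (τ + a * (a * G) / (a * S1)) * (S1 / (a * S1)) +
      (G * S1 - a * G * S1 ^ 2 / (a * S1)) / (G * SS - S1 ^ 2) = -τ / a := by
  have ha : a ≠ 0 := left_ne_zero_of_mul haS
  have hS1 : S1 ≠ 0 := right_ne_zero_of_mul haS
  field_simp
  ring

/-- in the two-dimensional quadratic termination argument, if
`g₁ᵀs₀ = 0`, `s₁ᵀy₀ = 0` and `g₂ ≠ 0`, then `y₁ = a g₂` for some `a ≠ 0`, the
coefficients evaluate to `u₂ = 0`, `v₂ = -τ/a`, and hence `g₃ = (1 - τ) g₂`. -/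
theorem stmt_13 (A : Matrix (Fin 2) (Fin 2) ℝ) (hAsymm : A.IsSymm) (hApd : A.PosDef)
    (b : Fin 2 → ℝ) (τ : ℝ) (x g : ℕ → Fin 2 → ℝ)
    (hg : ∀ k, g k = A.mulVec (x k) + b)
    (hs0 : x 1 - x 0 ≠ 0)
    (hg1 : g 1 ≠ 0) (hg2 : g 2 ≠ 0)
    (hexact : g 1 ⬝ᵥ (x 1 - x 0) = 0)
    (hconj : (x 2 - x 1) ⬝ᵥ (g 1 - g 0) = 0)
    (hgs : g 2 ⬝ᵥ (x 2 - x 1) ≠ 0)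
    (hsy : (x 2 - x 1) ⬝ᵥ (g 2 - g 1) ≠ 0)
    (hpar : (g 2 ⬝ᵥ g 2) * ((x 2 - x 1) ⬝ᵥ (x 2 - x 1)) -
      (g 2 ⬝ᵥ (x 2 - x 1)) ^ 2 ≠ 0)
    (hstep : x 3 = x 2 + uCoef (g 2) (x 2 - x 1) (g 2 - g 1) • g 2 +
      vCoef τ (g 2) (x 2 - x 1) (g 2 - g 1) • (x 2 - x 1)) :
    ∃ a : ℝ, a ≠ 0 ∧ g 2 - g 1 = a • g 2 ∧
      uCoef (g 2) (x 2 - x 1) (g 2 - g 1) = 0 ∧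
      vCoef τ (g 2) (x 2 - x 1) (g 2 - g 1) = -τ / a ∧
      g 3 = (1 - τ) • g 2 := by
  set s0 := x 1 - x 0 with hs0def
  set s := x 2 - x 1 with hsdef
  set y := g 2 - g 1 with hydef
  -- A maps step differences to gradient differences
  have hAs : A.mulVec s = y := by
    simp only [hsdef, hydef, Matrix.mulVec_sub, hg]
    abel
  have hAs0 : A.mulVec s0 = g 1 - g 0 := by
    simp only [hs0def, Matrix.mulVec_sub, hg]
    abel
  -- y is orthogonal to s0
  have hy_s0 : y ⬝ᵥ s0 = 0 := by
    rw [← hAs, dotProduct_comm, Matrix.dotProduct_mulVec,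
      ← Matrix.mulVec_transpose, hAsymm.eq, hAs0, dotProduct_comm]
    exact hconj
  -- determinant of (g 1, y) vanishes
  have e1 : g 1 0 * s0 0 + g 1 1 * s0 1 = 0 := by
    simpa [dotProduct, Fin.sum_univ_two] using hexact
  have e2 : y 0 * s0 0 + y 1 * s0 1 = 0 := by
    simpa [dotProduct, Fin.sum_univ_two] using hy_s0
  have hdet : g 1 0 * y 1 - g 1 1 * y 0 = 0 := by
    rcases Function.ne_iff.mp hs0 with ⟨i, hi⟩
    have hi' : s0 i ≠ 0 := by simpa using hi
    fin_cases i
    · have h : (g 1 0 * y 1 - g 1 1 * y 0) * s0 0 = 0 := by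
        linear_combination y 1 * e1 - g 1 1 * e2
      exact (mul_eq_zero.mp h).resolve_right hi'
    · have h : (g 1 0 * y 1 - g 1 1 * y 0) * s0 1 = 0 := by
        linear_combination (- y 0) * e1 + g 1 0 * e2
      exact (mul_eq_zero.mp h).resolve_right hi'
  -- determinant of (y, g 2) vanishes
  have hdet2 : y 0 * g 2 1 - y 1 * g 2 0 = 0 := by
    have h20 : g 2 0 = g 1 0 + y 0 := by simp [hydef]
    have h21 : g 2 1 = g 1 1 + y 1 := by simp [hydef]
    rw [h20, h21]; linear_combination -hdet
  have hG : g 2 ⬝ᵥ g 2 ≠ 0 := by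
    intro h
    exact hg2 ((dotProduct_self_eq_zero).mp h)
  set a : ℝ := (y ⬝ᵥ g 2) / (g 2 ⬝ᵥ g 2) with hadef
  have hy : y = a • g 2 := by
    have hGexp : g 2 ⬝ᵥ g 2 = g 2 0 * g 2 0 + g 2 1 * g 2 1 := by
      simp [dotProduct, Fin.sum_univ_two]
    have hyg : y ⬝ᵥ g 2 = y 0 * g 2 0 + y 1 * g 2 1 := by
      simp [dotProduct, Fin.sum_univ_two]
    have hG' : g 2 0 * g 2 0 + g 2 1 * g 2 1 ≠ 0 := hGexp ▸ hG
    funext i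
    fin_cases i
    · show y 0 = a * g 2 0
      rw [hadef, hyg, hGexp, div_mul_eq_mul_div, eq_div_iff hG']
      linear_combination g 2 1 * hdet2
    · show y 1 = a * g 2 1
      rw [hadef, hyg, hGexp, div_mul_eq_mul_div, eq_div_iff hG']
      linear_combination (- g 2 0) * hdet2
  -- a ≠ 0
  have hsy' : s ⬝ᵥ y = a * (g 2 ⬝ᵥ s) := by
    rw [hy, dotProduct_smul, smul_eq_mul, dotProduct_comm]
  have ha : a ≠ 0 := by
    intro h
    apply hsy
    rw [hsy', h, zero_mul]
  -- dot product identities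
  have hgy : g 2 ⬝ᵥ y = a * (g 2 ⬝ᵥ g 2) := by
    rw [hy, dotProduct_smul, smul_eq_mul]
  have hyy : y ⬝ᵥ y = a * (a * (g 2 ⬝ᵥ g 2)) := by
    rw [hy, dotProduct_smul, smul_dotProduct, smul_eq_mul, smul_eq_mul]
  have hasne : a * (g 2 ⬝ᵥ s) ≠ 0 := mul_ne_zero ha hgs
  have hu : uCoef (g 2) s y = 0 := by
    rw [uCoef, hgy, hsy']
    exact ucalc a (g 2 ⬝ᵥ g 2) (g 2 ⬝ᵥ s) (s ⬝ᵥ s) hG hasne hpar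
  have hv : vCoef τ (g 2) s y = -τ / a := by
    rw [vCoef, hgy, hyy, hsy']
    exact vcalc τ a (g 2 ⬝ᵥ g 2) (g 2 ⬝ᵥ s) (s ⬝ᵥ s) hasne hpar
  refine ⟨a, ha, hy, hu, hv, ?_⟩
  have hx3 : x 3 = x 2 + (-τ / a) • s := by
    rw [hstep, hu, hv, zero_smul, add_zero]
  have : g 3 = g 2 + (-τ / a) • y := by
    rw [hg 3, hx3, Matrix.mulVec_add, Matrix.mulVec_smul, hAs, hg 2]
    abel
  rw [this, hy, smul_smul]
  have hta : -τ / a * a = -τ := by field_simp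
  rw [hta]
  module
end
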